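/- Let F : ℝ⁶ → ℝ⁶ be the polynomial map F(x⁰,x¹,x²,x³,x⁴,x⁵) = (y⁰,y¹,y²,y³,y⁴,y⁵) with y⁰ = x⁰ + x¹x⁴ + 3x⁵x²x⁴ − (x⁵)³(x⁴)², y¹ = x¹ + (x⁵)³x⁴, y² = x² − (x⁵)²x⁴, y³ = x³ + x⁵x⁴, y⁴ = x⁵, y⁵ = x⁴. Then F is a bijection of ℝ⁶ with polynomial inverse, and F pulls back the 1-forms η⁰ = dy⁰ − y⁵dy¹ − 3y⁴y⁵dy² − 3(y² + y⁵(y⁴)²)dy³; η¹ = dy¹ + 3y⁴dy² + 3(y⁴)²dy³; η² = dy² + 2y⁴dy³; η³ = dy³ − y⁵dy⁴; η⁴ = dy⁵; η⁷ = −dy⁴ to the 1-forms ω⁰ = dx⁰ + x¹dx⁴ − 3x²dx³; ω¹ = dx¹ + 3x⁵dx² + 3(x⁵)²dx³ + (x⁵)³dx⁴; ω² = dx² + 2x⁵dx³ + (x⁵)²dx⁴; ω³ = dx³ + x⁵dx⁴; ω⁴ = dx⁴; ω⁷ = −dx⁵ respectively; that is, for each i ∈ {0,1,2,3,4,7} and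 every p ∈ ℝ⁶ and v ∈ ℝ⁶, η^i(F(p))((DF)_p(v)) = ω^i(p)(v). -/
import Mathlib

open Matrix

noncomputable section

/-- Points of `ℝ⁶`. -/
abbrev Pt6 := Fin 6 → ℝ

/-- The coordinate change `F : (x) ↦ (y)` between the two coordinate systems on
the correspondence space `G₂/P₁,₂`. -/
def Fmap : Pt6 → Pt6 := fun p =>
  ![p 0 + p 1 * p 4 + 3 * p 5 * p 2 * p 4 - p 5 ^ 3 * p 4 ^ 2,
    p 1 + p 5 ^ 3 * p 4,
    p 2 - p 5 ^ 2 * p 4,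
    p 3 + p 5 * p 4,
    p 5,
    p 4]

/-- The coframe `(ωⁱ)` in the `x`-coordinates. -/
def ωx : Fin 6 → Pt6 → Pt6 :=
  ![fun p => ![1, 0, 0, -3 * p 2, p 1, 0],
    fun p => ![0, 1, 3 * p 5, 3 * p 5 ^ 2, p 5 ^ 3, 0],
    fun p => ![0, 0, 1, 2 * p 5, p 5 ^ 2, 0],
    fun p => ![0, 0, 0, 1, p 5, 0],
    fun _ => ![0, 0, 0, 0, 1, 0],
    fun _ => ![0, 0, 0, 0, 0, -1]]

/-- The coframe `(ηⁱ)` in the `y`-coordinates. -/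
def ηy : Fin 6 → Pt6 → Pt6 :=
  ![fun p => ![1, -p 5, -3 * p 4 * p 5, -3 * (p 2 + p 5 * p 4 ^ 2), 0, 0],
    fun p => ![0, 1, 3 * p 4, 3 * p 4 ^ 2, 0, 0],
    fun p => ![0, 0, 1, 2 * p 4, 0, 0],
    fun p => ![0, 0, 0, 1, -p 5, 0],
    fun _ => ![0, 0, 0, 0, 0, 1],
    fun _ => ![0, 0, 0, 0, -1, 0]]

@[simp]
lemma Matrix.cons_val_five {α : Type*} {m : ℕ} (x : α) (u : Fin m.succ.succ.succ.succ.succ → α) :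
    Matrix.vecCons x u 5 =
      Matrix.vecHead (Matrix.vecTail (Matrix.vecTail (Matrix.vecTail (Matrix.vecTail u)))) :=
  rfl

/-- The inverse coordinate change. -/
def Gmap : Pt6 → Pt6 := fun p =>
  ![p 0 - (p 1 - p 4 ^ 3 * p 5) * p 5 - 3 * p 4 * (p 2 + p 4 ^ 2 * p 5) * p 5 + p 4 ^ 3 * p 5 ^ 2,
    p 1 - p 4 ^ 3 * p 5,
    p 2 + p 4 ^ 2 * p 5,
    p 3 - p 4 * p 5,
    p 5,
    p 4]

/-- Projection onto the `i`-th coordinate, as a continuous linear map. -/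
def pr (i : Fin 6) : Pt6 →L[ℝ] ℝ := ContinuousLinearMap.proj i

/-- The rows of the Jacobian of `Fmap`, as continuous linear maps. -/
def Dmat (p : Pt6) : Fin 6 → (Pt6 →L[ℝ] ℝ) :=
  ![pr 0 + (p 1 • pr 4 + p 4 • pr 1) + ((3 * p 5 * p 2) • pr 4 + (3 * p 5 * p 4) • pr 2
      + (3 * p 2 * p 4) • pr 5) - ((2 * p 5 ^ 3 * p 4) • pr 4 + (3 * p 5 ^ 2 * p 4 ^ 2) • pr 5),
    pr 1 + (p 5 ^ 3 • pr 4 + (3 * p 5 ^ 2 * p 4) • pr 5),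
    pr 2 - (p 5 ^ 2 • pr 4 + (2 * p 5 * p 4) • pr 5),
    pr 3 + (p 5 • pr 4 + p 4 • pr 5),
    pr 5,
    pr 4]

lemma hasFDerivAt_Fmap (p : Pt6) :
    HasFDerivAt Fmap (ContinuousLinearMap.pi (Dmat p)) p := by
  have h : ∀ i : Fin 6, HasFDerivAt (fun f : Pt6 => f i) (pr i) p := fun i =>
    hasFDerivAt_apply i p
  apply hasFDerivAt_pi''
  intro i
  fin_cases i <;>
    simp only [Fmap, Dmat, ContinuousLinearMap.proj_pi, Matrix.cons_val_zero, Matrix.cons_val_one,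
      Matrix.head_cons, Matrix.cons_val_two, Matrix.tail_cons, Matrix.cons_val_three,
      Matrix.cons_val_four, Matrix.cons_val_fin_one, pow_succ, pow_zero, one_mul]
  · exact ((((h 0).add ((h 1).mul (h 4))).add ((((h 5).const_mul 3).mul (h 2)).mul (h 4))).sub
      ((((h 5).mul (h 5)).mul (h 5)).mul ((h 4).mul (h 4)))).congr_fderiv (by
        ext v
        simp [pr, pow_succ]
        ring)
  · exact ((h 1).add ((((h 5).mul (h 5)).mul (h 5)).mul (h 4))).congr_fderiv (by
        ext v; simp [pr, pow_succ]; ring)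
  · exact ((h 2).sub (((h 5).mul (h 5)).mul (h 4))).congr_fderiv (by
        ext v; simp [pr, pow_succ]; ring)
  · exact ((h 3).add ((h 5).mul (h 4))).congr_fderiv (by ext v; simp [pr])
  · exact h 5
  · exact h 4

lemma Gmap_left : Function.LeftInverse Gmap Fmap := by
  intro x
  funext i
  fin_cases i <;> (simp [Fmap, Gmap]; try ring)

lemma Gmap_right : Function.RightInverse Gmap Fmap := by
  intro y
  funext i
  fin_cases i <;> (simp [Fmap, Gmap]; try ring)

/-- `F` is a bijection of `ℝ⁶` with polynomial inverse, and `F` pulls back the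
coframe `(ηⁱ)` to the coframe `(ωⁱ)`: `ηⁱ(F(p))((DF)_p(v)) = ωⁱ(p)(v)`. -/
theorem G2_coordinate_change_pullback :
    Function.Bijective Fmap ∧
    (∃ Ginv : Pt6 → Pt6,
      (∀ i : Fin 6, ∃ q : MvPolynomial (Fin 6) ℝ, ∀ p : Pt6, Ginv p i = MvPolynomial.eval p q) ∧
      Function.LeftInverse Ginv Fmap ∧ Function.RightInverse Ginv Fmap) ∧
    (∀ (i : Fin 6) (p v : Pt6),
      ηy i (Fmap p) ⬝ᵥ fderiv ℝ Fmap p v = ωx i p ⬝ᵥ v) := by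
  refine ⟨Function.bijective_iff_has_inverse.mpr ⟨Gmap, Gmap_left, Gmap_right⟩,
    ⟨Gmap, ?_, Gmap_left, Gmap_right⟩, ?_⟩
  · intro i
    fin_cases i
    · exact ⟨MvPolynomial.X 0 - (MvPolynomial.X 1 - MvPolynomial.X 4 ^ 3 * MvPolynomial.X 5) *
        MvPolynomial.X 5 - 3 * MvPolynomial.X 4 * (MvPolynomial.X 2 + MvPolynomial.X 4 ^ 2 *
        MvPolynomial.X 5) * MvPolynomial.X 5 + MvPolynomial.X 4 ^ 3 * MvPolynomial.X 5 ^ 2,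
        fun p => by simp [Gmap]⟩
    · exact ⟨MvPolynomial.X 1 - MvPolynomial.X 4 ^ 3 * MvPolynomial.X 5, fun p => by simp [Gmap]⟩
    · exact ⟨MvPolynomial.X 2 + MvPolynomial.X 4 ^ 2 * MvPolynomial.X 5, fun p => by simp [Gmap]⟩
    · exact ⟨MvPolynomial.X 3 - MvPolynomial.X 4 * MvPolynomial.X 5, fun p => by simp [Gmap]⟩
    · exact ⟨MvPolynomial.X 5, fun p => by simp [Gmap]⟩
    · exact ⟨MvPolynomial.X 4, fun p => by simp [Gmap]⟩
  · intro i p v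
    rw [(hasFDerivAt_Fmap p).fderiv]
    fin_cases i <;>
      (simp [ηy, ωx, Fmap, Dmat, pr, dotProduct, Fin.sum_univ_six]; try ring)
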